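/- For D > 0, t > 0, r_r > 0, the passive-receiver fraction F(t|r₀) = (1/2)[erf((r_r−r₀)/(2√(Dt))) + erf((r_r+r₀)/(2√(Dt)))] + (√(Dt)/(√π r₀))·[exp(−(r_r+r₀)²/(4Dt)) − exp(−(r₀−r_r)²/(4Dt))] satisfies 0 ≤ F(t|r₀) ≤ 1 for all r₀ > 0, and lim_{t→∞} F(t|r₀) = 0. -/

import Mathlib

open Real Filter

/-- The error function `erf x = (2/√π) ∫₀^x e^{−u²} du`. -/
noncomputable def erf (x : ℝ) : ℝ :=
  (2 / Real.sqrt π) * ∫ u in (0:ℝ)..x, Real.exp (-u ^ 2)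

/-!
Put `a = (r₀ - r_r)/(2√(Dt))` and `b = (r₀ + r_r)/(2√(Dt))`, so that `|a| ≤ b` and
`a + b = r₀/√(Dt)`. Then `F = (erf b - erf a)/2 - (e^{-a²} - e^{-b²})/(√π (a + b))`, and the
subtracted term is nonnegative, so `F ≤ (erf b - erf a)/2`; this is at most `1`, and at most
`(b - a)/√π = r_r/√(πDt) → 0`.

For `F ≥ 0`: since `e^{-a²} - e^{-b²} = ∫_a^b 2u e^{-u²} du`, the claim is
`∫_a^b (a + b - 2u) e^{-u²} du ≥ 0`. The reflection `u ↦ a + b - u` of `[a, b]` flips the sign of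
`a + b - 2u`, and when `a + b ≥ 0` the point with `a + b - 2u > 0` is the one closer to `0`, so
pairing the two halves gives a nonnegative integrand.
-/

open MeasureTheory intervalIntegral

lemma intervalIntegrable_exp_neg_sq (a b : ℝ) :
    IntervalIntegrable (fun u ↦ exp (-u ^ 2)) volume a b :=
  (by fun_prop : Continuous fun u : ℝ ↦ exp (-u ^ 2)).intervalIntegrable a b

lemma erf_neg (x : ℝ) : erf (-x) = -erf x := by
  have h := integral_comp_neg (a := 0) (b := x) fun u ↦ exp (-u ^ 2)
  simp only [neg_sq, neg_zero] at h
  rw [erf, erf, integral_symm, ← h, mul_neg]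

lemma erf_sub_erf (a b : ℝ) :
    erf b - erf a = 2 / √π * ∫ u in a..b, exp (-u ^ 2) := by
  rw [erf, erf, ← mul_sub, integral_interval_sub_left (intervalIntegrable_exp_neg_sq _ _)
    (intervalIntegrable_exp_neg_sq _ _)]

lemma erf_sub_erf_le {a b : ℝ} (hab : a ≤ b) : erf b - erf a ≤ 2 / √π * (b - a) := by
  rw [erf_sub_erf]
  gcongr
  calc ∫ u in a..b, exp (-u ^ 2) ≤ ∫ _ in a..b, (1 : ℝ) :=
        integral_mono_on hab (intervalIntegrable_exp_neg_sq a b) intervalIntegrable_const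
          fun u _ ↦ exp_le_one_iff.mpr (neg_nonpos.mpr (sq_nonneg u))
    _ = b - a := by simp

lemma integral_exp_neg_sq_le_half_sqrt_pi (x : ℝ) :
    ∫ u in (0 : ℝ)..x, exp (-u ^ 2) ≤ √π / 2 := by
  rcases le_total x 0 with hx | hx
  · have : 0 ≤ ∫ u in x..0, exp (-u ^ 2) := integral_nonneg hx fun u _ ↦ (exp_pos _).le
    rw [integral_symm]
    have : 0 ≤ √π := sqrt_nonneg π
    linarith
  · have hIoi : ∫ u in Set.Ioi (0 : ℝ), exp (-u ^ 2) = √π / 2 := by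
      simpa using integral_gaussian_Ioi 1
    rw [integral_of_le hx, ← hIoi]
    refine setIntegral_mono_set ?_ (.of_forall fun u ↦ (exp_pos _).le)
      (.of_forall fun u hu ↦ Set.Ioc_subset_Ioi_self hu)
    simpa using (integrable_exp_neg_mul_sq one_pos).integrableOn

lemma erf_le_one (x : ℝ) : erf x ≤ 1 := by
  have hπ : 0 < √π := sqrt_pos.mpr pi_pos
  calc erf x ≤ 2 / √π * (√π / 2) := by
        rw [erf]; gcongr; exact integral_exp_neg_sq_le_half_sqrt_pi x
    _ = 1 := by field_simp

lemma integral_two_mul_mul_exp_neg_sq (a b : ℝ) :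
    ∫ u in a..b, 2 * u * exp (-u ^ 2) = exp (-a ^ 2) - exp (-b ^ 2) := by
  have hderiv (u : ℝ) : HasDerivAt (fun v ↦ -exp (-v ^ 2)) (2 * u * exp (-u ^ 2)) u := by
    refine ((hasDerivAt_pow 2 u).fun_neg.exp).fun_neg.congr_deriv ?_
    norm_num
    ring
  rw [integral_eq_sub_of_hasDerivAt (fun u _ ↦ hderiv u)
    ((by fun_prop : Continuous fun u : ℝ ↦ 2 * u * exp (-u ^ 2)).intervalIntegrable a b)]
  ring

lemma mul_exp_neg_sq_sub_exp_neg_sq_nonneg {c u : ℝ} (hc : 0 ≤ c) :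
    0 ≤ (c - 2 * u) * (exp (-u ^ 2) - exp (-(c - u) ^ 2)) := by
  have hsq : (c - u) ^ 2 - u ^ 2 = c * (c - 2 * u) := by ring
  rcases le_total (2 * u) c with hu | hu
  · refine mul_nonneg (by linarith) (sub_nonneg.mpr (exp_le_exp.mpr ?_))
    nlinarith [mul_nonneg hc (sub_nonneg.mpr hu)]
  · refine mul_nonneg_of_nonpos_of_nonpos (by linarith) (sub_nonpos.mpr (exp_le_exp.mpr ?_))
    nlinarith [mul_nonneg hc (sub_nonneg.mpr hu)]

lemma integral_sub_two_mul_mul_exp_neg_sq_nonneg {a b : ℝ} (hab : a ≤ b) (hsum : 0 ≤ a + b) :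
    0 ≤ ∫ u in a..b, (a + b - 2 * u) * exp (-u ^ 2) := by
  set g : ℝ → ℝ := fun u ↦ (a + b - 2 * u) * exp (-u ^ 2)
  have hg : Continuous g := by fun_prop
  have hreflect : ∫ u in a..b, g (a + b - u) = ∫ u in a..b, g u := by
    rw [integral_comp_sub_left g (a + b), add_sub_cancel_right, add_sub_cancel_left]
  have hsymm : 2 * ∫ u in a..b, g u = ∫ u in a..b, (g u + g (a + b - u)) := by
    have hg' : IntervalIntegrable (fun u ↦ g (a + b - u)) volume a b :=
      (hg.comp (continuous_sub_left (a + b))).intervalIntegrable a b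
    rw [intervalIntegral.integral_add (hg.intervalIntegrable a b) hg', hreflect, two_mul]
  have hpair : 0 ≤ ∫ u in a..b, (g u + g (a + b - u)) := by
    refine integral_nonneg hab fun u _ ↦ ?_
    convert mul_exp_neg_sq_sub_exp_neg_sq_nonneg (u := u) hsum using 1
    simp only [g]; ring
  linarith

lemma exp_neg_sq_sub_exp_neg_sq_le {a b : ℝ} (hab : a ≤ b) (hsum : 0 ≤ a + b) :
    exp (-a ^ 2) - exp (-b ^ 2) ≤ (a + b) * ∫ u in a..b, exp (-u ^ 2) := by
  have h := integral_sub_two_mul_mul_exp_neg_sq_nonneg hab hsum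
  simp only [sub_mul] at h
  have hint₁ : IntervalIntegrable (fun u ↦ (a + b) * exp (-u ^ 2)) volume a b :=
    (intervalIntegrable_exp_neg_sq a b).const_mul (a + b)
  have hint₂ : IntervalIntegrable (fun u ↦ 2 * u * exp (-u ^ 2)) volume a b :=
    (by fun_prop : Continuous fun u : ℝ ↦ 2 * u * exp (-u ^ 2)).intervalIntegrable a b
  rw [intervalIntegral.integral_sub hint₁ hint₂, intervalIntegral.integral_const_mul,
    integral_two_mul_mul_exp_neg_sq] at h
  linarith

noncomputable def passiveFractionScaled (a b : ℝ) : ℝ :=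
  (erf b - erf a) / 2 - (exp (-a ^ 2) - exp (-b ^ 2)) / (√π * (a + b))

lemma passiveFractionScaled_nonneg {a b : ℝ} (hab : a ≤ b) (hsum : 0 < a + b) :
    0 ≤ passiveFractionScaled a b := by
  have hπ : 0 < √π := sqrt_pos.mpr pi_pos
  rw [passiveFractionScaled, erf_sub_erf, sub_nonneg, div_le_iff₀ (by positivity)]
  calc exp (-a ^ 2) - exp (-b ^ 2) ≤ (a + b) * ∫ u in a..b, exp (-u ^ 2) :=
        exp_neg_sq_sub_exp_neg_sq_le hab hsum.le
    _ = 2 / √π * (∫ u in a..b, exp (-u ^ 2)) / 2 * (√π * (a + b)) := by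
        field_simp

lemma passiveFractionScaled_le_half_erf_sub_erf {a b : ℝ} (hab : |a| ≤ b) :
    passiveFractionScaled a b ≤ (erf b - erf a) / 2 := by
  obtain ⟨hba, hab⟩ := abs_le.mp hab
  rw [passiveFractionScaled, sub_le_self_iff]
  refine div_nonneg (sub_nonneg.mpr (exp_le_exp.mpr (neg_le_neg (sq_le_sq' hba hab))))
    (mul_nonneg (sqrt_nonneg π) (by linarith))

lemma half_erf_sub_erf_le_one (a b : ℝ) : (erf b - erf a) / 2 ≤ 1 := by
  linarith [erf_le_one b, erf_le_one (-a), erf_neg a]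

lemma abs_sub_div_le_add_div {x y c : ℝ} (hx : 0 ≤ x) (hy : 0 ≤ y) (hc : 0 ≤ c) :
    |(x - y) / c| ≤ (y + x) / c := by
  rw [abs_div, abs_of_nonneg hc]
  gcongr
  exact abs_sub_le_iff.mpr ⟨by linarith, by linarith⟩

/-- `passiveFraction D rr r0 t` is `F(t | r₀)` with diffusion coefficient `D` and `r_r = rr`. -/
noncomputable def passiveFraction (D rr r0 t : ℝ) : ℝ :=
  (1/2) * (erf ((rr - r0) / (2 * Real.sqrt (D * t))) +
      erf ((rr + r0) / (2 * Real.sqrt (D * t)))) +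
    (Real.sqrt (D * t) / (Real.sqrt π * r0)) *
      (Real.exp (-(rr + r0) ^ 2 / (4 * D * t)) -
        Real.exp (-(r0 - rr) ^ 2 / (4 * D * t)))

section passiveFraction

variable {D rr r0 t : ℝ}

lemma passiveFraction_eq_scaled (hDt : 0 < D * t) (hr0 : r0 ≠ 0) :
    passiveFraction D rr r0 t =
      passiveFractionScaled ((r0 - rr) / (2 * √(D * t))) ((rr + r0) / (2 * √(D * t))) := by
  rw [passiveFraction, passiveFractionScaled]
  set s := √(D * t)
  have hs : 0 < s := sqrt_pos.mpr hDt
  have hs2 : 4 * D * t = (2 * s) ^ 2 := by rw [mul_pow, sq_sqrt hDt.le]; ring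
  have hneg : (rr - r0) / (2 * s) = -((r0 - rr) / (2 * s)) := by ring
  have hsum : (r0 - rr) / (2 * s) + (rr + r0) / (2 * s) = r0 / s := by field_simp; ring
  rw [hneg, erf_neg, hs2, neg_div, neg_div, ← div_pow, ← div_pow, hsum]
  field_simp
  ring

lemma passiveFraction_nonneg (hDt : 0 < D * t) (hrr : 0 ≤ rr) (hr0 : 0 < r0) :
    0 ≤ passiveFraction D rr r0 t := by
  rw [passiveFraction_eq_scaled hDt hr0.ne']
  refine passiveFractionScaled_nonneg
    ((le_abs_self _).trans (abs_sub_div_le_add_div hr0.le hrr (by positivity))) ?_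
  rw [← add_div]
  exact div_pos (by linarith) (by positivity)

lemma passiveFraction_le_half_erf_sub_erf (hDt : 0 < D * t) (hrr : 0 ≤ rr) (hr0 : 0 < r0) :
    passiveFraction D rr r0 t ≤
      (erf ((rr + r0) / (2 * √(D * t))) - erf ((r0 - rr) / (2 * √(D * t)))) / 2 := by
  rw [passiveFraction_eq_scaled hDt hr0.ne']
  exact passiveFractionScaled_le_half_erf_sub_erf
    (abs_sub_div_le_add_div hr0.le hrr (by positivity))

lemma passiveFraction_le_one (hDt : 0 < D * t) (hrr : 0 ≤ rr) (hr0 : 0 < r0) :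
    passiveFraction D rr r0 t ≤ 1 :=
  (passiveFraction_le_half_erf_sub_erf hDt hrr hr0).trans (half_erf_sub_erf_le_one _ _)

lemma passiveFraction_le_div_sqrt (hDt : 0 < D * t) (hrr : 0 ≤ rr) (hr0 : 0 < r0) :
    passiveFraction D rr r0 t ≤ rr / (√π * √(D * t)) := by
  have hs : 0 < √(D * t) := sqrt_pos.mpr hDt
  have hπ : 0 < √π := sqrt_pos.mpr pi_pos
  refine (passiveFraction_le_half_erf_sub_erf hDt hrr hr0).trans ?_
  calc _ ≤ 2 / √π * ((rr + r0) / (2 * √(D * t)) - (r0 - rr) / (2 * √(D * t))) / 2 := by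
        gcongr
        refine erf_sub_erf_le ?_
        gcongr
        linarith
    _ = rr / (√π * √(D * t)) := by
        field_simp
        ring

lemma tendsto_passiveFraction_atTop (hD : 0 < D) (hrr : 0 ≤ rr) (hr0 : 0 < r0) :
    Tendsto (passiveFraction D rr r0) atTop (nhds 0) := by
  have hdenom : Tendsto (fun t ↦ √π * √(D * t)) atTop atTop :=
    (tendsto_sqrt_atTop.comp (tendsto_id.const_mul_atTop hD)).const_mul_atTop
      (sqrt_pos.mpr pi_pos)
  refine squeeze_zero' ?_ ?_ ((tendsto_const_nhds (x := rr)).div_atTop hdenom)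
  · filter_upwards [eventually_gt_atTop 0] with t ht
    exact passiveFraction_nonneg (mul_pos hD ht) hrr hr0
  · filter_upwards [eventually_gt_atTop 0] with t ht
    exact passiveFraction_le_div_sqrt (mul_pos hD ht) hrr hr0

end passiveFraction

/-- The passive-receiver observation fraction lies in `[0,1]` and vanishes as
`t → ∞`. -/
theorem passive_fraction_bounds
    (D rr : ℝ) (hD : 0 < D) (hrr : 0 < rr) :
    (∀ t : ℝ, 0 < t → ∀ r0 : ℝ, 0 < r0 →
      0 ≤ (1/2) * (erf ((rr - r0) / (2 * Real.sqrt (D * t))) +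
            erf ((rr + r0) / (2 * Real.sqrt (D * t)))) +
          (Real.sqrt (D * t) / (Real.sqrt π * r0)) *
            (Real.exp (-(rr + r0) ^ 2 / (4 * D * t)) -
              Real.exp (-(r0 - rr) ^ 2 / (4 * D * t))) ∧
      (1/2) * (erf ((rr - r0) / (2 * Real.sqrt (D * t))) +
            erf ((rr + r0) / (2 * Real.sqrt (D * t)))) +
          (Real.sqrt (D * t) / (Real.sqrt π * r0)) *
            (Real.exp (-(rr + r0) ^ 2 / (4 * D * t)) -
              Real.exp (-(r0 - rr) ^ 2 / (4 * D * t))) ≤ 1) ∧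
    (∀ r0 : ℝ, 0 < r0 →
      Tendsto (fun t : ℝ =>
          (1/2) * (erf ((rr - r0) / (2 * Real.sqrt (D * t))) +
              erf ((rr + r0) / (2 * Real.sqrt (D * t)))) +
            (Real.sqrt (D * t) / (Real.sqrt π * r0)) *
              (Real.exp (-(rr + r0) ^ 2 / (4 * D * t)) -
                Real.exp (-(r0 - rr) ^ 2 / (4 * D * t))))
        atTop (nhds 0)) :=
  ⟨fun _ ht _ hr0 ↦ ⟨passiveFraction_nonneg (mul_pos hD ht) hrr.le hr0,
      passiveFraction_le_one (mul_pos hD ht) hrr.le hr0⟩,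
    fun _ hr0 ↦ tendsto_passiveFraction_atTop hD hrr.le hr0⟩
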